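/- arXiv:2309.06392 — 2 statements merged into one kernel-verified Lean document; each statement's English description precedes it below -/
import Mathlib

section
/- Marginal gain formula for information centrality: for a connected graph G on n vertices, target node v, and edge e with G∖{e} connected, with a = 1 − b_eᵀL†b_e, b = b_eᵀL^{2†}b_e, c = ((L†b_e)_v)², the change I_v({e}) − I_v(∅) equals −(nb + n²c) / [(n a L†_{vv} + n c + a·tr(L†) + b)(n L†_{vv} + tr(L†))]. -/
open Matrix Finset
open scoped Classical

/-- The four Penrose identities: `B` is the Moore–Penrose pseudoinverse of `A`. -/
def IsMoorePenrose {m : Type*} [Fintype m] [DecidableEq m]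
    (A B : Matrix m m ℝ) : Prop :=
  A * B * A = A ∧ B * A * B = B ∧ (A * B)ᵀ = A * B ∧ (B * A)ᵀ = B * A

/-- The Moore–Penrose pseudoinverse (chosen when it exists, `0` otherwise). -/
noncomputable def pinv {m : Type*} [Fintype m] [DecidableEq m]
    (A : Matrix m m ℝ) : Matrix m m ℝ :=
  if h : ∃ B, IsMoorePenrose A B then h.choose else 0

/-- Signed incidence vector `b_{xy} = e_x - e_y`. -/
def incVec {n : ℕ} (x y : Fin n) : Fin n → ℝ :=
  fun i => (if i = x then 1 else 0) - (if i = y then 1 else 0)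

/-- Effective resistance between `x` and `y` in `G`. -/
noncomputable def effRes {n : ℕ} (G : SimpleGraph (Fin n)) (x y : Fin n) : ℝ :=
  incVec x y ⬝ᵥ (pinv (G.lapMatrix ℝ)).mulVec (incVec x y)

/-- Resistance distance of `v`: sum of effective resistances to all other vertices. -/
noncomputable def resDist {n : ℕ} (G : SimpleGraph (Fin n)) (v : Fin n) : ℝ :=
  ∑ u ∈ Finset.univ.erase v, effRes G u v

/-- Information centrality of `v`. -/
noncomputable def infoCent {n : ℕ} (G : SimpleGraph (Fin n)) (v : Fin n) : ℝ :=
  (n : ℝ) / resDist G v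

/-!
For connected `G`, the pseudoinverse is `L† = (L + J/n)⁻¹ - J/n`. Deleting the edge `e` changes
`L + J/n` by the rank-one term `b_e b_eᵀ`, so Sherman–Morrison gives
`L_P† = L† + (L† b_e)(L† b_e)ᵀ / a`, and the matrix determinant lemma shows `a ≠ 0` because
`L_P + J/n` is still invertible when `G ∖ e` is connected. Since the rows of `L†` sum to zero, the
resistance distance of `v` is `n L†_vv + tr L†`, which therefore grows by `(n c + b) / a`; the
formula is then algebra on `n / R`.
-/

section MoorePenrose

variable {m : Type*} [Fintype m] [DecidableEq m]

theorem IsMoorePenrose.unique {A B C : Matrix m m ℝ} (hB : IsMoorePenrose A B)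
    (hC : IsMoorePenrose A C) : B = C := by
  obtain ⟨hABA, hBAB, hAB, hBA⟩ := hB
  obtain ⟨hACA, hCAC, hAC, hCA⟩ := hC
  have hAB_eq : A * B = A * C := by
    calc A * B = (A * C * A * B)ᵀ := by rw [hACA, hAB]
      _ = (A * B)ᵀ * (A * C)ᵀ := by rw [← transpose_mul, Matrix.mul_assoc (A * C)]
      _ = A * C := by rw [hAB, hAC, ← Matrix.mul_assoc, hABA]
  have hBA_eq : B * A = C * A := by
    calc B * A = (B * (A * C * A))ᵀ := by rw [hACA, hBA]
      _ = (C * A)ᵀ * (B * A)ᵀ := by rw [← transpose_mul]; simp only [Matrix.mul_assoc]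
      _ = C * A := by rw [hBA, hCA, Matrix.mul_assoc, ← Matrix.mul_assoc A, hABA]
  calc B = B * A * B := hBAB.symm
    _ = C * A * C := by rw [Matrix.mul_assoc, hAB_eq, ← Matrix.mul_assoc, hBA_eq]
    _ = C := hCAC

theorem pinv_eq_of_isMoorePenrose {A B : Matrix m m ℝ} (h : IsMoorePenrose A B) :
    pinv A = B := by
  have hex : ∃ B, IsMoorePenrose A B := ⟨B, h⟩
  rw [pinv, dif_pos hex]
  exact hex.choose_spec.unique h

theorem pinv_sub_of_isIdempotentElem {M J : Matrix m m ℝ} (hM : IsUnit M.det)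
    (hJ : IsIdempotentElem J) (hJT : Jᵀ = J) (hMJ : M * J = J) (hJM : J * M = J) :
    pinv (M - J) = M⁻¹ - J := by
  have hJMinv : J * M⁻¹ = J := by
    rw [← hJM, Matrix.mul_assoc, mul_nonsing_inv M hM, Matrix.mul_one, hJM]
  have hMinvJ : M⁻¹ * J = J := by
    rw [← hMJ, ← Matrix.mul_assoc, nonsing_inv_mul M hM, Matrix.one_mul, hMJ]
  have hright : (M - J) * (M⁻¹ - J) = 1 - J := by
    rw [Matrix.sub_mul, Matrix.mul_sub, Matrix.mul_sub, mul_nonsing_inv M hM, hMJ, hJMinv,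
      hJ.eq]
    abel
  have hleft : (M⁻¹ - J) * (M - J) = 1 - J := by
    rw [Matrix.sub_mul, Matrix.mul_sub, Matrix.mul_sub, nonsing_inv_mul M hM, hMinvJ, hJM, hJ.eq]
    abel
  have hproj : (1 - J)ᵀ = 1 - J := by rw [transpose_sub, transpose_one, hJT]
  apply pinv_eq_of_isMoorePenrose
  refine ⟨?_, ?_, by rw [hright, hproj], by rw [hleft, hproj]⟩
  · rw [hright, Matrix.sub_mul, Matrix.one_mul, Matrix.mul_sub, hJM, hJ.eq, sub_self, sub_zero]
  · rw [hleft, Matrix.sub_mul, Matrix.one_mul, Matrix.mul_sub, hJMinv, hJ.eq, sub_self, sub_zero]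

end MoorePenrose

section RankOne

variable {m 𝕜 : Type*} [Fintype m] [DecidableEq m] [Field 𝕜]

theorem det_sub_vecMulVec {M : Matrix m m 𝕜} (hM : IsUnit M.det) (u v : m → 𝕜) :
    (M - vecMulVec u v).det = M.det * (1 - v ⬝ᵥ M⁻¹ *ᵥ u) := by
  rw [sub_eq_add_neg, ← neg_vecMulVec, vecMulVec_eq Unit,
    det_add_replicateCol_mul_replicateRow hM, Matrix.mul_assoc, ← replicateCol_mulVec]
  congr 1
  rw [det_unique, Matrix.add_apply, one_apply_eq, replicateRow_mul_replicateCol_apply, mulVec_neg,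
    dotProduct_neg, ← sub_eq_add_neg]

theorem inv_sub_vecMulVec {M : Matrix m m 𝕜} (hM : IsUnit M.det) (u v : m → 𝕜)
    (ha : 1 - v ⬝ᵥ M⁻¹ *ᵥ u ≠ 0) :
    (M - vecMulVec u v)⁻¹ =
      M⁻¹ + (1 - v ⬝ᵥ M⁻¹ *ᵥ u)⁻¹ • vecMulVec (M⁻¹ *ᵥ u) (v ᵥ* M⁻¹) := by
  set a := 1 - v ⬝ᵥ M⁻¹ *ᵥ u with ha_def
  have hdot : v ⬝ᵥ M⁻¹ *ᵥ u = 1 - a := by rw [ha_def]; ring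
  have hcoef : a⁻¹ * (1 - a) = a⁻¹ - 1 := by field_simp
  apply inv_eq_right_inv
  rw [Matrix.sub_mul, Matrix.mul_add, Matrix.mul_add, mul_nonsing_inv M hM, Matrix.mul_smul,
    Matrix.mul_smul, mul_vecMulVec, mulVec_mulVec, mul_nonsing_inv M hM, one_mulVec,
    vecMulVec_mul_vecMulVec, vecMulVec_smul, hdot, smul_smul, hcoef, vecMulVec_mul]
  module

end RankOne

section Laplacian

variable {V : Type*} [Fintype V]

/-- `J / n`, the orthogonal projection onto the constant vectors. -/
noncomputable def meanMatrix (V : Type*) [Fintype V] : Matrix V V ℝ :=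
  of fun _ _ => (Fintype.card V : ℝ)⁻¹

theorem transpose_meanMatrix : (meanMatrix V)ᵀ = meanMatrix V := rfl

theorem meanMatrix_mulVec (f : V → ℝ) :
    meanMatrix V *ᵥ f = fun _ => (Fintype.card V : ℝ)⁻¹ * ∑ i, f i := by
  ext; simp [meanMatrix, mulVec, dotProduct, Finset.mul_sum]

theorem meanMatrix_mulVec_one [Nonempty V] : meanMatrix V *ᵥ (fun _ => 1) = fun _ => 1 := by
  rw [meanMatrix_mulVec]
  ext
  simp

theorem isIdempotentElem_meanMatrix [Nonempty V] : IsIdempotentElem (meanMatrix V) := by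
  ext i j
  simp [meanMatrix, Matrix.mul_apply]

variable [DecidableEq V] {G : SimpleGraph V} [DecidableRel G.Adj]

theorem lapMatrix_mul_meanMatrix : G.lapMatrix ℝ * meanMatrix V = 0 := by
  ext i j
  have h := congrFun (G.lapMatrix_mulVec_const_eq_zero (R := ℝ)) i
  simp only [mulVec, dotProduct, mul_one, Pi.zero_apply] at h
  simp [meanMatrix, Matrix.mul_apply, ← Finset.sum_mul, h]

theorem meanMatrix_mul_lapMatrix : meanMatrix V * G.lapMatrix ℝ = 0 := by
  rw [← (G.isSymm_lapMatrix (R := ℝ)).eq, ← transpose_meanMatrix, ← transpose_mul,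
    lapMatrix_mul_meanMatrix, transpose_zero]

theorem posDef_lapMatrix_add_meanMatrix (hG : G.Connected) :
    (G.lapMatrix ℝ + meanMatrix V).PosDef := by
  have := hG.nonempty
  refine posDef_iff_dotProduct_mulVec.2 ⟨?_, fun x hx => ?_⟩
  · rw [IsHermitian, conjTranspose_eq_transpose_of_trivial, transpose_add,
      (G.isSymm_lapMatrix (R := ℝ)).eq, transpose_meanMatrix]
  have hJ : x ⬝ᵥ meanMatrix V *ᵥ x = (Fintype.card V : ℝ)⁻¹ * (∑ i, x i) ^ 2 := by
    simp [meanMatrix_mulVec, dotProduct, ← Finset.sum_mul]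
    ring
  have hL : 0 ≤ x ⬝ᵥ G.lapMatrix ℝ *ᵥ x := by
    simpa using (G.posSemidef_lapMatrix ℝ).dotProduct_mulVec_nonneg x
  rw [star_trivial, add_mulVec, dotProduct_add, hJ]
  rcases hL.lt_or_eq with hL | hL
  · positivity
  obtain ⟨i₀⟩ := this
  have hconst : ∀ i, x i = x i₀ := fun i =>
    (G.lapMatrix_toLinearMap₂'_apply'_eq_zero_iff_forall_reachable x).1
      (by rw [toLinearMap₂'_apply']; exact hL.symm) i i₀ (hG.preconnected i i₀)
  have hx₀ : x i₀ ≠ 0 := fun h => hx (funext fun i => (hconst i).trans h)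
  have hsum : ∑ i, x i = Fintype.card V * x i₀ := by simp [hconst]
  have hcard : (0 : ℝ) < Fintype.card V := Nat.cast_pos.2 (Fintype.card_pos_iff.2 ⟨i₀⟩)
  rw [← hL, zero_add, hsum]
  positivity

theorem pinv_lapMatrix (hG : G.Connected) :
    pinv (G.lapMatrix ℝ) = (G.lapMatrix ℝ + meanMatrix V)⁻¹ - meanMatrix V := by
  have := hG.nonempty
  have hJ := isIdempotentElem_meanMatrix (V := V)
  conv_lhs => rw [← add_sub_cancel_right (G.lapMatrix ℝ) (meanMatrix V)]
  refine pinv_sub_of_isIdempotentElem ?_ hJ transpose_meanMatrix ?_ ?_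
  · exact (isUnit_iff_isUnit_det _).1 (posDef_lapMatrix_add_meanMatrix hG).isUnit
  · rw [Matrix.add_mul, lapMatrix_mul_meanMatrix, hJ.eq, zero_add]
  · rw [Matrix.mul_add, meanMatrix_mul_lapMatrix, hJ.eq, zero_add]

theorem isSymm_pinv_lapMatrix (hG : G.Connected) : (pinv (G.lapMatrix ℝ)).IsSymm := by
  have hM : (G.lapMatrix ℝ + meanMatrix V).IsSymm :=
    (G.isSymm_lapMatrix (R := ℝ)).add (IsSymm.ext fun _ _ => rfl)
  rw [pinv_lapMatrix hG, IsSymm, transpose_sub, transpose_nonsing_inv, hM.eq, transpose_meanMatrix]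

theorem pinv_lapMatrix_mulVec_one (hG : G.Connected) :
    pinv (G.lapMatrix ℝ) *ᵥ (fun _ => 1) = 0 := by
  have := hG.nonempty
  set M := G.lapMatrix ℝ + meanMatrix V
  have hM : IsUnit M.det :=
    (isUnit_iff_isUnit_det _).1 (posDef_lapMatrix_add_meanMatrix hG).isUnit
  have hM1 : M *ᵥ (fun _ => 1) = fun _ => 1 := by
    rw [add_mulVec, G.lapMatrix_mulVec_const_eq_zero, meanMatrix_mulVec_one, zero_add]
  have hMinv1 : M⁻¹ *ᵥ (fun _ => 1) = fun _ => 1 := by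
    conv_lhs => rw [← hM1, mulVec_mulVec, nonsing_inv_mul M hM, one_mulVec]
  rw [pinv_lapMatrix hG, sub_mulVec, hMinv1, meanMatrix_mulVec_one, sub_self]

theorem isUnit_det_lapMatrix_add_meanMatrix (hG : G.Connected) :
    IsUnit (G.lapMatrix ℝ + meanMatrix V).det :=
  (isUnit_iff_isUnit_det _).1 (posDef_lapMatrix_add_meanMatrix hG).isUnit

theorem sum_pinv_lapMatrix_apply (hG : G.Connected) (i : V) :
    ∑ j, pinv (G.lapMatrix ℝ) i j = 0 := by
  simpa [mulVec, dotProduct] using congrFun (pinv_lapMatrix_mulVec_one hG) i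

end Laplacian

section Resistance

variable {n : ℕ}

theorem sum_incVec (x y : Fin n) : ∑ i, incVec x y i = 0 := by
  simp [incVec, Finset.sum_sub_distrib]

theorem incVec_ne_zero {x y : Fin n} (h : x ≠ y) : incVec x y ≠ 0 := fun h0 => by
  simpa [incVec, h] using congrFun h0 x

theorem meanMatrix_mulVec_incVec (x y : Fin n) : meanMatrix (Fin n) *ᵥ incVec x y = 0 := by
  ext
  simp [meanMatrix_mulVec, sum_incVec]

theorem incVec_dotProduct_mulVec_incVec (A : Matrix (Fin n) (Fin n) ℝ) (x y : Fin n) :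
    incVec x y ⬝ᵥ A *ᵥ incVec x y = A x x - A x y - A y x + A y y := by
  simp only [incVec, dotProduct, mulVec, sub_mul, mul_sub, ite_mul, mul_ite, one_mul, mul_one,
    zero_mul, mul_zero, Finset.sum_sub_distrib, Finset.sum_ite_eq', Finset.mem_univ, if_true]
  ring

variable {G : SimpleGraph (Fin n)}

theorem resDist_eq [DecidableRel G.Adj] (hG : G.Connected) (v : Fin n) :
    resDist G v = n * pinv (G.lapMatrix ℝ) v v + (pinv (G.lapMatrix ℝ)).trace := by
  -- `resDist` is defined through the classical decidability instance
  obtain rfl : ‹DecidableRel G.Adj› = fun _ _ => Classical.propDecidable _ := Subsingleton.elim _ _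
  have hrow : ∑ u, pinv (G.lapMatrix ℝ) v u = 0 := sum_pinv_lapMatrix_apply hG v
  have hcol : ∑ u, pinv (G.lapMatrix ℝ) u v = 0 := by
    rw [← hrow]
    exact Finset.sum_congr rfl fun u _ => (isSymm_pinv_lapMatrix hG).apply v u
  simp only [resDist, effRes, incVec_dotProduct_mulVec_incVec]
  rw [Finset.sum_erase_eq_sub (Finset.mem_univ v)]
  simp only [Finset.sum_add_distrib, Finset.sum_sub_distrib, hrow, hcol, Finset.sum_const,
    Finset.card_univ, Fintype.card_fin, nsmul_eq_mul, trace, Matrix.diag]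
  ring

theorem effRes_pos (hG : G.Connected) {u v : Fin n} (huv : u ≠ v) : 0 < effRes G u v := by
  rw [effRes, pinv_lapMatrix hG, sub_mulVec, meanMatrix_mulVec_incVec, dotProduct_sub,
    dotProduct_zero, sub_zero]
  simpa using (posDef_lapMatrix_add_meanMatrix hG).inv.dotProduct_mulVec_pos (incVec_ne_zero huv)

theorem resDist_pos (hG : G.Connected) (hn : 1 < n) (v : Fin n) : 0 < resDist G v := by
  refine Finset.sum_pos (fun u hu => effRes_pos hG (Finset.ne_of_mem_erase hu)) ?_
  rw [← Finset.card_pos, Finset.card_erase_of_mem (Finset.mem_univ v), Finset.card_univ,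
    Fintype.card_fin]
  omega

end Resistance

section DeleteEdge

variable {n : ℕ} {G : SimpleGraph (Fin n)} {x y : Fin n}

theorem ite_adj_deleteEdges (hxy : G.Adj x y) (i j : Fin n) :
    (if (G.deleteEdges {s(x, y)}).Adj i j then 1 else 0 : ℝ) =
      (if G.Adj i j then 1 else 0) -
        ((if i = x then 1 else 0) * (if j = y then 1 else 0) +
          (if i = y then 1 else 0) * (if j = x then 1 else 0)) := by
  simp only [SimpleGraph.deleteEdges_adj, Set.mem_singleton_iff, Sym2.eq_iff]
  by_cases hi : i = x <;> by_cases hj : j = y <;> by_cases hi' : i = y <;> by_cases hj' : j = x <;>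
    simp_all [hxy.ne, hxy.ne.symm, hxy.symm]

theorem degree_deleteEdges (hxy : G.Adj x y) (i : Fin n) :
    ((G.deleteEdges {s(x, y)}).degree i : ℝ) = G.degree i - incVec x y i ^ 2 := by
  rw [SimpleGraph.degree_eq_sum_if_adj, SimpleGraph.degree_eq_sum_if_adj]
  simp only [ite_adj_deleteEdges hxy, Finset.sum_sub_distrib, Finset.sum_add_distrib,
    ← Finset.mul_sum, Finset.sum_ite_eq', Finset.mem_univ, if_true, mul_one, incVec]
  by_cases hx : i = x <;> by_cases hy : i = y <;> simp_all [hxy.ne]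

theorem lapMatrix_deleteEdges (hxy : G.Adj x y) :
    (G.deleteEdges {s(x, y)}).lapMatrix ℝ =
      G.lapMatrix ℝ - vecMulVec (incVec x y) (incVec x y) := by
  ext i j
  simp only [SimpleGraph.lapMatrix, SimpleGraph.degMatrix, SimpleGraph.adjMatrix_apply,
    Matrix.sub_apply, diagonal_apply, vecMulVec_apply]
  by_cases hij : i = j
  · subst hij
    simp only [if_true, degree_deleteEdges hxy, SimpleGraph.irrefl, if_false]
    ring
  · have hne := hxy.ne
    rw [if_neg hij, if_neg hij, ite_adj_deleteEdges hxy]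
    simp only [incVec]
    split_ifs <;> subst_vars <;> simp_all

theorem inv_lapMatrix_add_meanMatrix_mulVec_incVec (hG : G.Connected) :
    (G.lapMatrix ℝ + meanMatrix (Fin n))⁻¹ *ᵥ incVec x y = pinv (G.lapMatrix ℝ) *ᵥ incVec x y := by
  rw [pinv_lapMatrix hG, sub_mulVec, meanMatrix_mulVec_incVec, sub_zero]

theorem incVec_vecMul_inv_lapMatrix_add_meanMatrix (hG : G.Connected) :
    incVec x y ᵥ* (G.lapMatrix ℝ + meanMatrix (Fin n))⁻¹ = pinv (G.lapMatrix ℝ) *ᵥ incVec x y := by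
  rw [← inv_lapMatrix_add_meanMatrix_mulVec_incVec hG, ← mulVec_transpose, transpose_nonsing_inv,
    transpose_add, (G.isSymm_lapMatrix (R := ℝ)).eq, transpose_meanMatrix]

theorem lapMatrix_deleteEdges_add_meanMatrix (hxy : G.Adj x y) :
    (G.deleteEdges {s(x, y)}).lapMatrix ℝ + meanMatrix (Fin n) =
      G.lapMatrix ℝ + meanMatrix (Fin n) - vecMulVec (incVec x y) (incVec x y) := by
  rw [lapMatrix_deleteEdges hxy, sub_add_eq_add_sub]

theorem one_sub_effRes_ne_zero (hG : G.Connected) (hxy : G.Adj x y)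
    (hconn : (G.deleteEdges {s(x, y)}).Connected) : 1 - effRes G x y ≠ 0 := by
  have hMP := isUnit_det_lapMatrix_add_meanMatrix hconn
  rw [lapMatrix_deleteEdges_add_meanMatrix hxy,
    det_sub_vecMulVec (isUnit_det_lapMatrix_add_meanMatrix hG),
    inv_lapMatrix_add_meanMatrix_mulVec_incVec hG] at hMP
  exact right_ne_zero_of_mul hMP.ne_zero

theorem pinv_lapMatrix_deleteEdges (hG : G.Connected) (hxy : G.Adj x y)
    (hconn : (G.deleteEdges {s(x, y)}).Connected) :
    pinv ((G.deleteEdges {s(x, y)}).lapMatrix ℝ) =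
      pinv (G.lapMatrix ℝ) + (1 - effRes G x y)⁻¹ •
        vecMulVec (pinv (G.lapMatrix ℝ) *ᵥ incVec x y) (pinv (G.lapMatrix ℝ) *ᵥ incVec x y) := by
  have ha := one_sub_effRes_ne_zero hG hxy hconn
  rw [effRes, ← inv_lapMatrix_add_meanMatrix_mulVec_incVec hG] at ha ⊢
  rw [pinv_lapMatrix hconn, lapMatrix_deleteEdges_add_meanMatrix hxy,
    inv_sub_vecMulVec (isUnit_det_lapMatrix_add_meanMatrix hG) _ _ ha,
    incVec_vecMul_inv_lapMatrix_add_meanMatrix hG,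
    inv_lapMatrix_add_meanMatrix_mulVec_incVec hG, pinv_lapMatrix hG]
  abel

theorem resDist_deleteEdges (hG : G.Connected) (hxy : G.Adj x y)
    (hconn : (G.deleteEdges {s(x, y)}).Connected) (v : Fin n) :
    resDist (G.deleteEdges {s(x, y)}) v =
      resDist G v + (1 - effRes G x y)⁻¹ *
        (n * (pinv (G.lapMatrix ℝ) *ᵥ incVec x y) v ^ 2 +
          incVec x y ⬝ᵥ (pinv (G.lapMatrix ℝ) * pinv (G.lapMatrix ℝ)) *ᵥ incVec x y) := by
  have hsq : incVec x y ⬝ᵥ (pinv (G.lapMatrix ℝ) * pinv (G.lapMatrix ℝ)) *ᵥ incVec x y =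
      (pinv (G.lapMatrix ℝ) *ᵥ incVec x y) ⬝ᵥ (pinv (G.lapMatrix ℝ) *ᵥ incVec x y) := by
    rw [← mulVec_mulVec, dotProduct_mulVec, ← mulVec_transpose, (isSymm_pinv_lapMatrix hG).eq]
  rw [resDist_eq hconn, resDist_eq hG, pinv_lapMatrix_deleteEdges hG hxy hconn, hsq,
    trace_add, trace_smul, trace_vecMulVec, Matrix.add_apply, Matrix.smul_apply, vecMulVec_apply,
    smul_eq_mul, smul_eq_mul]
  ring

end DeleteEdge

theorem div_add_inv_mul_sub_div {K : Type*} [Field K] {N R s a : K} (ha : a ≠ 0) (hR : R ≠ 0)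
    (hR' : R + a⁻¹ * s ≠ 0) :
    N / (R + a⁻¹ * s) - N / R = -(N * s) / ((a * R + s) * R) := by
  have hRs : R + a⁻¹ * s = (a * R + s) / a := by field_simp
  rw [hRs] at hR' ⊢
  rw [div_ne_zero_iff] at hR'
  rw [div_div_eq_mul_div, div_sub_div _ _ hR'.1 hR]
  ring

/-- Marginal gain formula for information centrality: with `a = 1 - b_eᵀL†b_e`,
`b = b_eᵀ(L†)²b_e`, `c = ((L†b_e)_v)²`, the change `I_v({e}) - I_v(∅)` equals
`-(nb + n²c) / ((n a L†_{vv} + n c + a tr(L†) + b)(n L†_{vv} + tr(L†)))`. -/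
theorem stmt_13 {n : ℕ} (G : SimpleGraph (Fin n)) (hG : G.Connected) (v x y : Fin n)
    (hxy : G.Adj x y) (hconn : (G.deleteEdges {s(x, y)}).Connected) :
    let L := G.lapMatrix ℝ
    let Ld := pinv L
    let be := incVec x y
    let a := 1 - be ⬝ᵥ Ld.mulVec be
    let b := be ⬝ᵥ (Ld * Ld).mulVec be
    let c := (Ld.mulVec be v) ^ 2
    infoCent (G.deleteEdges {s(x, y)}) v - infoCent G v =
      -((n : ℝ) * b + (n : ℝ) ^ 2 * c) /
        (((n : ℝ) * a * Ld v v + (n : ℝ) * c + a * Ld.trace + b) *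
          ((n : ℝ) * Ld v v + Ld.trace)) := by
  intro L Ld be a b c
  have hn : 1 < n := by simpa using Fintype.one_lt_card_iff_nontrivial.2 ⟨⟨x, y, hxy.ne⟩⟩
  have hRP := resDist_deleteEdges hG hxy hconn v
  have hRP_pos := resDist_pos hconn hn v
  rw [hRP] at hRP_pos
  rw [infoCent, infoCent, hRP, div_add_inv_mul_sub_div (one_sub_effRes_ne_zero hG hxy hconn)
    (resDist_pos hG hn v).ne' hRP_pos.ne', resDist_eq hG, effRes]
  ring
end

section
/- Schur complement preserves effective resistance: for a connected graph G with Laplacian L and nonempty T ⊂ V, the Schur complement S(T) = L_{[T,T]} − L_{[T,F]} L_{[F,F]}⁻¹ L_{[F,T]} (F = V∖T) is itself a Laplacian of a weighted graph on T, and for any x, y ∈ T the effective resistance between x and y in that graph equals the effective resistance between x and y in G. -/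
open Matrix Finset
open scoped Classical

/-- Schur complement of the Laplacian onto a vertex set `T` (with `F = Tᶜ`). -/
noncomputable def schur {n : ℕ} (G : SimpleGraph (Fin n)) (T : Set (Fin n)) :
    Matrix T T ℝ :=
  (G.lapMatrix ℝ).submatrix (Subtype.val : T → Fin n) (Subtype.val : T → Fin n) -
    (G.lapMatrix ℝ).submatrix (Subtype.val : T → Fin n) (Subtype.val : ↥Tᶜ → Fin n) *
      ((G.lapMatrix ℝ).submatrix (Subtype.val : ↥Tᶜ → Fin n) (Subtype.val : ↥Tᶜ → Fin n))⁻¹ *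
      (G.lapMatrix ℝ).submatrix (Subtype.val : ↥Tᶜ → Fin n) (Subtype.val : T → Fin n)

/-!
If `M v = b` with `b` supported on `T`, the `F`-rows of the system give
`v_F = -M[F,F]⁻¹ M[F,T] v_T`, and substituting this into the `T`-rows gives `S(T) v_T = b_T`.
For a symmetric `A` with `A B A = A` one has `bᵀ B b = bᵀ v` whenever `A v = b`; so both effective
resistances equal `b_{xy}ᵀ v` for a potential `v` with `L v = b_{xy}`, which exists because
`b_{xy}` is orthogonal to `ker L`, the constants.

`S(T)` inherits symmetry from `L`, and `L 1 = 0` gives `S(T) 1 = 0`. Its off-diagonal entries are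
nonpositive because `L[F,F]` is a positive definite matrix (as `G` is connected and `T ≠ ∅`) with
nonpositive off-diagonal entries, and such a matrix has an entrywise nonnegative inverse.
-/

open Matrix

section MoorePenrose

variable {m : Type*} [Fintype m]

theorem dotProduct_mulVec_of_mul_mul_eq {A B : Matrix m m ℝ} (hA : A.IsSymm)
    (hABA : A * B * A = A) {u b : m → ℝ} (hu : A *ᵥ u = b) : b ⬝ᵥ (B *ᵥ b) = b ⬝ᵥ u := by
  rw [← hu, dotProduct_comm, dotProduct_mulVec, ← mulVec_transpose, hA.eq, mulVec_mulVec,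
    mulVec_mulVec, hABA]

variable [DecidableEq m]

theorem exists_isMoorePenrose_of_isSymm {A : Matrix m m ℝ} (hA : A.IsSymm) :
    ∃ B, IsMoorePenrose A B := by
  replace hA := isHermitian_iff_isSymm.2 hA
  set U : Matrix m m ℝ := (hA.eigenvectorUnitary : Matrix m m ℝ)
  have hUU : star U * U = 1 := (Matrix.mem_unitaryGroup_iff').mp hA.eigenvectorUnitary.2
  set d : m → ℝ := hA.eigenvalues
  have hA_eq : A = U * diagonal d * star U := by simpa using hA.spectral_theorem
  have conj_mul_conj (f g : m → ℝ) :
      U * diagonal f * star U * (U * diagonal g * star U) = U * diagonal (f * g) * star U := by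
    simp only [Matrix.mul_assoc]
    rw [← Matrix.mul_assoc (star U) U, hUU, Matrix.one_mul, ← Matrix.mul_assoc (diagonal f),
      diagonal_mul_diagonal]
    rfl
  have conj_transpose (f : m → ℝ) : (U * diagonal f * star U)ᵀ = U * diagonal f * star U := by
    rw [star_eq_conjTranspose, conjTranspose_eq_transpose_of_trivial, transpose_mul, transpose_mul,
      transpose_transpose, diagonal_transpose, Matrix.mul_assoc]
  -- invert the nonzero eigenvalues, using `0⁻¹ = 0` for the others
  refine ⟨U * diagonal d⁻¹ * star U, ?_, ?_, ?_, ?_⟩ <;>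
    simp only [hA_eq, conj_mul_conj, conj_transpose]
  · congr 3; funext i; exact mul_inv_mul_cancel (d i)
  · congr 3; funext i; simpa using mul_inv_mul_cancel (d i)⁻¹

theorem isMoorePenrose_pinv {A : Matrix m m ℝ} (hA : A.IsSymm) :
    IsMoorePenrose A (pinv A) := by
  have h := exists_isMoorePenrose_of_isSymm hA
  rw [pinv, dif_pos h]
  exact h.choose_spec

theorem IsMoorePenrose.mulVec_mulVec_of_forall_ker {A B : Matrix m m ℝ}
    (h : IsMoorePenrose A B) (hA : A.IsSymm) {b : m → ℝ} (hb : ∀ w, A *ᵥ w = 0 → w ⬝ᵥ b = 0) :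
    A *ᵥ (B *ᵥ b) = b := by
  have hAAB : A * (A * B) = A := by
    rw [← h.2.2.1, transpose_mul, hA.eq, ← Matrix.mul_assoc]
    calc A * Bᵀ * A = (A * B * A)ᵀ := by
          rw [transpose_mul, transpose_mul, hA.eq, Matrix.mul_assoc]
      _ = A := by rw [h.1, hA.eq]
  set w := b - A *ᵥ (B *ᵥ b)
  have hw : A *ᵥ w = 0 := by
    rw [mulVec_sub, mulVec_mulVec, mulVec_mulVec, Matrix.mul_assoc, hAAB, sub_self]
  have hww : w ⬝ᵥ w = 0 := by
    calc w ⬝ᵥ w = w ⬝ᵥ b - (A *ᵥ w) ⬝ᵥ (B *ᵥ b) := by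
          rw [dotProduct_sub, dotProduct_mulVec, ← mulVec_transpose, hA.eq]
      _ = 0 := by rw [hb w hw, hw, zero_dotProduct, sub_zero]
  exact (sub_eq_zero.1 (dotProduct_self_eq_zero.1 hww)).symm

end MoorePenrose

section ZMatrix

variable {m : Type*} [Fintype m] {A : Matrix m m ℝ}

theorem negPart_mul_add_negPart (a : ℝ) : a⁻ * (a + a⁻) = 0 := by
  rcases le_total 0 a with h | h
  · simp [negPart_eq_zero.2 h]
  · simp [negPart_eq_neg.2 h]

theorem Matrix.PosDef.nonneg_of_mulVec_nonneg (hA : A.PosDef) (hZ : ∀ i j, i ≠ j → A i j ≤ 0)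
    {x : m → ℝ} (hx : 0 ≤ A *ᵥ x) : 0 ≤ x := by
  set q : m → ℝ := fun i => (x i)⁻
  -- every term `q i * A i j * (x j + q j)` is `≤ 0`: off the diagonal by sign, on it since
  -- `q i * (x i + q i) = 0`
  have hq_pos : q ⬝ᵥ (A *ᵥ (x + q)) ≤ 0 := by
    simp only [dotProduct, mulVec, Finset.mul_sum]
    refine Finset.sum_nonpos fun i _ => Finset.sum_nonpos fun j _ => ?_
    rcases eq_or_ne i j with rfl | hij
    · simp only [Pi.add_apply, q]
      rw [mul_left_comm, negPart_mul_add_negPart, mul_zero]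
    · have : 0 ≤ x j + (x j)⁻ := by linarith [neg_le_negPart (x j)]
      exact mul_nonpos_of_nonneg_of_nonpos (negPart_nonneg _)
        (mul_nonpos_of_nonpos_of_nonneg (hZ i j hij) this)
  have hq_x : 0 ≤ q ⬝ᵥ (A *ᵥ x) :=
    Finset.sum_nonneg fun i _ => mul_nonneg (negPart_nonneg _) (hx i)
  have hq : q = 0 := by
    by_contra hq
    have := hA.dotProduct_mulVec_pos hq
    rw [star_trivial, mulVec_add, dotProduct_add] at *
    linarith
  intro i
  exact negPart_eq_zero.1 (congrFun hq i)

theorem Matrix.PosDef.inv_apply_nonneg [DecidableEq m] (hA : A.PosDef)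
    (hZ : ∀ i j, i ≠ j → A i j ≤ 0) (i j : m) : 0 ≤ A⁻¹ i j := by
  have hcol : A *ᵥ (A⁻¹ *ᵥ Pi.single j 1) = Pi.single j 1 := by
    rw [mulVec_mulVec, mul_nonsing_inv A ((isUnit_iff_isUnit_det A).1 hA.isUnit), one_mulVec]
  have := hA.nonneg_of_mulVec_nonneg hZ (hcol ▸ Pi.single_nonneg.2 zero_le_one) i
  simpa [mulVec_single_one] using this

end ZMatrix

section SchurComplement

variable {ι : Type*} [Fintype ι]

theorem submatrix_mulVec_add_submatrix_compl_mulVec {κ : Type*} (M : Matrix ι ι ℝ) (T : Set ι)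
    (r : κ → ι) (v : ι → ℝ) :
    M.submatrix r ((↑) : T → ι) *ᵥ (fun j : T => v j) +
      M.submatrix r ((↑) : ↥Tᶜ → ι) *ᵥ (fun j : ↥Tᶜ => v j) = fun i => (M *ᵥ v) (r i) := by
  funext i
  exact Fintype.sum_subtype_add_sum_subtype (· ∈ T) (fun j => M (r i) j * v j)

theorem dotProduct_submatrix_mulVec {α : Type*} [Fintype α] (M : Matrix ι ι ℝ) {e : α → ι}
    (he : Function.Injective e) (x : α → ℝ) :
    x ⬝ᵥ (M.submatrix e e *ᵥ x) =
      Function.extend e x 0 ⬝ᵥ (M *ᵥ Function.extend e x 0) := by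
  have hext : ∀ i ∉ Set.range e, Function.extend e x 0 i = 0 := fun i hi =>
    Function.extend_apply' _ _ _ hi
  simp only [dotProduct, mulVec]
  refine Fintype.sum_of_injective e he _ _ (fun i hi => by rw [hext i hi, zero_mul]) fun a => ?_
  rw [he.extend_apply]
  congr 1
  exact Fintype.sum_of_injective e he _ _ (fun i hi => by rw [hext i hi, mul_zero])
    fun b => by rw [he.extend_apply, submatrix_apply]

variable [DecidableEq ι]

noncomputable def schurCompl (M : Matrix ι ι ℝ) (T : Set ι) : Matrix T T ℝ :=
  M.submatrix (↑) (↑) - M.submatrix (↑) ((↑) : ↥Tᶜ → ι) *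
    (M.submatrix ((↑) : ↥Tᶜ → ι) ((↑) : ↥Tᶜ → ι))⁻¹ * M.submatrix ((↑) : ↥Tᶜ → ι) (↑)

theorem schur_eq_schurCompl {n : ℕ} (G : SimpleGraph (Fin n)) (T : Set (Fin n)) :
    schur G T = schurCompl (G.lapMatrix ℝ) T := rfl

variable {M : Matrix ι ι ℝ} {T : Set ι}

theorem schurCompl_isSymm (hM : M.IsSymm) : (schurCompl M T).IsSymm := by
  rw [IsSymm, schurCompl, transpose_sub, transpose_mul, transpose_mul]
  simp only [transpose_submatrix, transpose_nonsing_inv, hM.eq, Matrix.mul_assoc]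

theorem schurCompl_mulVec (hD : IsUnit (M.submatrix ((↑) : ↥Tᶜ → ι) ((↑) : ↥Tᶜ → ι)).det)
    {v : ι → ℝ} (hv : ∀ i ∉ T, (M *ᵥ v) i = 0) :
    schurCompl M T *ᵥ (fun i : T => v i) = fun i : T => (M *ᵥ v) i := by
  set u : T → ℝ := fun i => v i
  set w : ↥Tᶜ → ℝ := fun i => v i
  set D := M.submatrix ((↑) : ↥Tᶜ → ι) ((↑) : ↥Tᶜ → ι)
  have hw : D⁻¹ *ᵥ (M.submatrix ((↑) : ↥Tᶜ → ι) ((↑) : T → ι) *ᵥ u) = -w := by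
    have hF := submatrix_mulVec_add_submatrix_compl_mulVec M T ((↑) : ↥Tᶜ → ι) v
    rw [eq_neg_of_add_eq_zero_left (hF.trans (funext fun i => hv i i.2)), ← mulVec_neg,
      mulVec_mulVec, nonsing_inv_mul _ hD, one_mulVec]
  rw [← submatrix_mulVec_add_submatrix_compl_mulVec M T ((↑) : T → ι) v, schurCompl, sub_mulVec,
    ← mulVec_mulVec, ← mulVec_mulVec, hw, mulVec_neg, sub_neg_eq_add]

theorem schurCompl_sum_apply_eq_zero
    (hD : IsUnit (M.submatrix ((↑) : ↥Tᶜ → ι) ((↑) : ↥Tᶜ → ι)).det)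
    (hM : M *ᵥ (fun _ => 1) = 0) (i : T) : ∑ j, schurCompl M T i j = 0 := by
  have h := congrFun (schurCompl_mulVec (v := fun _ => 1) hD fun j _ => by rw [hM, Pi.zero_apply]) i
  rw [hM] at h
  simpa [mulVec, dotProduct] using h

theorem schurCompl_apply_nonpos (hM : ∀ i j, i ≠ j → M i j ≤ 0)
    (hD : (M.submatrix ((↑) : ↥Tᶜ → ι) ((↑) : ↥Tᶜ → ι)).PosDef) {i j : T} (hij : i ≠ j) :
    schurCompl M T i j ≤ 0 := by
  have hD_inv := hD.inv_apply_nonneg fun k l hkl => hM k l (Subtype.coe_injective.ne hkl)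
  have hM_TF (i : T) (k : ↥Tᶜ) : M i k ≤ 0 := hM _ _ fun h => k.2 (h ▸ i.2)
  have hM_FT (k : ↥Tᶜ) (j : T) : M k j ≤ 0 := hM _ _ fun h => k.2 (h ▸ j.2)
  have hcorr : 0 ≤ (M.submatrix ((↑) : T → ι) ((↑) : ↥Tᶜ → ι) *
      (M.submatrix ((↑) : ↥Tᶜ → ι) ((↑) : ↥Tᶜ → ι))⁻¹ *
        M.submatrix ((↑) : ↥Tᶜ → ι) ((↑) : T → ι)) i j := by
    simp only [mul_apply, Finset.sum_mul]
    exact Finset.sum_nonneg fun k _ => Finset.sum_nonneg fun l _ =>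
      mul_nonneg_of_nonpos_of_nonpos
        (mul_nonpos_of_nonpos_of_nonneg (hM_TF i l) (hD_inv l k)) (hM_FT k j)
  rw [schurCompl, Matrix.sub_apply, submatrix_apply]
  linarith [hM _ _ (Subtype.coe_injective.ne hij)]

theorem dotProduct_pinv_schurCompl_mulVec (hM : M.IsSymm)
    (hD : IsUnit (M.submatrix ((↑) : ↥Tᶜ → ι) ((↑) : ↥Tᶜ → ι)).det) {v b : ι → ℝ}
    (hv : M *ᵥ v = b) (hb : ∀ i ∉ T, b i = 0) :
    (fun i : T => b i) ⬝ᵥ (pinv (schurCompl M T) *ᵥ fun i : T => b i) = b ⬝ᵥ (pinv M *ᵥ b) := by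
  have hS := schurCompl_isSymm (T := T) hM
  have hSv : schurCompl M T *ᵥ (fun i : T => v i) = fun i : T => b i := by
    have h := schurCompl_mulVec hD fun i hi => by rw [hv, hb i hi]
    rwa [hv] at h
  rw [dotProduct_mulVec_of_mul_mul_eq hS (isMoorePenrose_pinv hS).1 hSv,
    dotProduct_mulVec_of_mul_mul_eq hM (isMoorePenrose_pinv hM).1 hv]
  exact Fintype.sum_of_injective _ Subtype.val_injective _ _
    (fun i hi => by rw [hb i (by simpa using hi), zero_mul]) fun _ => rfl

end SchurComplement

section Laplacian

variable {V : Type*} [Fintype V] [DecidableEq V] (G : SimpleGraph V) [DecidableRel G.Adj]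

theorem SimpleGraph.lapMatrix_apply_nonpos_of_ne {i j : V} (h : i ≠ j) :
    G.lapMatrix ℝ i j ≤ 0 := by
  simp only [SimpleGraph.lapMatrix, Matrix.sub_apply, SimpleGraph.degMatrix,
    diagonal_apply_ne _ h, SimpleGraph.adjMatrix_apply, zero_sub, neg_nonpos]
  positivity

theorem SimpleGraph.posDef_lapMatrix_submatrix_compl (hG : G.Connected) {T : Set V}
    (hT : T.Nonempty) : ((G.lapMatrix ℝ).submatrix ((↑) : ↥Tᶜ → V) ((↑) : ↥Tᶜ → V)).PosDef := by
  have hpsd := (G.posSemidef_lapMatrix ℝ).submatrix ((↑) : ↥Tᶜ → V)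
  refine .of_dotProduct_mulVec_pos hpsd.isHermitian fun x hx => ?_
  rw [star_trivial]
  refine (hpsd.dotProduct_mulVec_nonneg x).lt_of_ne' fun h0 => hx ?_
  set y := Function.extend ((↑) : ↥Tᶜ → V) x 0
  rw [star_trivial, dotProduct_submatrix_mulVec _ Subtype.val_injective, ← toLinearMap₂'_apply',
    G.lapMatrix_toLinearMap₂'_apply'_eq_zero_iff_forall_reachable] at h0
  -- `y` is constant on the connected graph and vanishes on `T`
  obtain ⟨t, ht⟩ := hT
  have hyt : y t = 0 := Function.extend_apply' _ _ _ fun ⟨a, ha⟩ => a.2 (ha ▸ ht)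
  funext a
  rw [Pi.zero_apply, ← Subtype.val_injective.extend_apply x 0 a]
  exact (h0 _ t (hG.preconnected _ t)).trans hyt

theorem SimpleGraph.lapMatrix_mulVec_pinv_mulVec (hG : G.Connected) {b : V → ℝ}
    (hb : ∑ i, b i = 0) : G.lapMatrix ℝ *ᵥ (pinv (G.lapMatrix ℝ) *ᵥ b) = b := by
  have hL : (G.lapMatrix ℝ).IsSymm := G.isSymm_lapMatrix ℝ
  refine (isMoorePenrose_pinv hL).mulVec_mulVec_of_forall_ker hL fun w hw => ?_
  rw [G.lapMatrix_mulVec_eq_zero_iff_forall_reachable] at hw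
  obtain ⟨v⟩ := hG.nonempty
  calc w ⬝ᵥ b = ∑ i, w v * b i :=
        Finset.sum_congr rfl fun i _ => by rw [hw i v (hG.preconnected i v)]
    _ = 0 := by rw [← Finset.mul_sum, hb, mul_zero]

end Laplacian

theorem stmt_16_general {n : ℕ} (G : SimpleGraph (Fin n)) (hG : G.Connected)
    (T : Set (Fin n)) (hT : T.Nonempty) :
    ((schur G T)ᵀ = schur G T ∧
      (∀ i : T, ∑ j : T, schur G T i j = 0) ∧
      (∀ i j : T, i ≠ j → schur G T i j ≤ 0)) ∧
    (∀ x y : T,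
      (fun i : T => (if i = x then (1 : ℝ) else 0) - if i = y then 1 else 0) ⬝ᵥ
          (pinv (schur G T)).mulVec
            (fun i : T => (if i = x then (1 : ℝ) else 0) - if i = y then 1 else 0) =
        effRes G x y) := by
  rw [schur_eq_schurCompl]
  have hL := G.isSymm_lapMatrix ℝ
  have hD := G.posDef_lapMatrix_submatrix_compl hG hT
  have hD_det := (isUnit_iff_isUnit_det _).1 hD.isUnit
  refine ⟨⟨schurCompl_isSymm hL,
    schurCompl_sum_apply_eq_zero hD_det G.lapMatrix_mulVec_const_eq_zero,
    fun i j => schurCompl_apply_nonpos (fun _ _ => G.lapMatrix_apply_nonpos_of_ne) hD⟩,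
    fun x y => ?_⟩
  have hb_T : (fun i : T => (if i = x then (1 : ℝ) else 0) - if i = y then 1 else 0) =
      fun i : T => incVec (x : Fin n) y i := by
    funext i
    simp [incVec, Subtype.ext_iff]
  have hb_F (i : Fin n) (hi : i ∉ T) : incVec (x : Fin n) y i = 0 := by
    simp [incVec, (ne_of_mem_of_not_mem x.2 hi).symm, (ne_of_mem_of_not_mem y.2 hi).symm]
  rw [hb_T, effRes, dotProduct_pinv_schurCompl_mulVec hL hD_det
    (G.lapMatrix_mulVec_pinv_mulVec hG ?_) hb_F]
  simp [incVec, Finset.sum_sub_distrib]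

/-- The Schur complement `S(T)` of the Laplacian of a connected graph is itself the
Laplacian of a weighted graph on `T` (symmetric, zero row sums, nonpositive
off-diagonal entries), and it preserves effective resistances between vertices of
`T`. -/
theorem stmt_16 {n : ℕ} (G : SimpleGraph (Fin n)) (hG : G.Connected)
    (T : Set (Fin n)) (hT : T.Nonempty) (hTV : T ≠ Set.univ) :
    ((schur G T)ᵀ = schur G T ∧
      (∀ i : T, ∑ j : T, schur G T i j = 0) ∧
      (∀ i j : T, i ≠ j → schur G T i j ≤ 0)) ∧
    (∀ x y : T,
      (fun i : T => (if i = x then (1 : ℝ) else 0) - if i = y then 1 else 0) ⬝ᵥ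
          (pinv (schur G T)).mulVec
            (fun i : T => (if i = x then (1 : ℝ) else 0) - if i = y then 1 else 0) =
        effRes G x y) :=
  stmt_16_general G hG T hT
end
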